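/- arXiv:1912.02540 — 3 statements merged into one kernel-verified Lean document; each statement's English description precedes it below -/
import Mathlib

section
/- Let δ₀ ∈ (0,1), λ ∈ (0,1], K : [1/λ,∞) → (δ₀, 1/δ₀) continuously differentiable with ‖K'‖_{L¹([1/λ,∞))} ≤ 1/δ₀, and G : [1/λ,∞) → ℝ with ‖G‖_{L¹([1/λ,∞))} ≤ λ/δ₀. Suppose y is a positive, strictly increasing solution of y'' − λ²K²y + Gy = 0 on [1/λ,∞) with y(1/λ) = 1 and y'(1/λ) ∈ (0, λ/δ₀). Then there exist constants 0 < c ≤ C depending only on δ₀ (not on λ) such that c·exp(λ∫_{1/λ}^r K(τ)dτ) ≤ y(r) ≤ C·exp(λ∫_{1/λ}^r K(τ)dτ) for all r ≥ 1/λ. -/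
open Set Real MeasureTheory Asymptotics

/-
Write `y'/y = λK + w`. The equation for `y` becomes the Riccati equation
`w' = -(y'/y + λK) w - (G + λK')`, whose damping coefficient `y'/y + λK` is at least `λδ₀`
because `y` is increasing. For such a damped linear equation `λδ₀ ∫|w| + |w|` has right
derivative at most `|G + λK'|`, hence `λδ₀ ∫|w| ≤ |w(1/λ)| + ‖G + λK'‖₁ ≤ 3λ/δ₀`.
The factor `λ` cancels, so `|log y(r) - λ∫K| = |∫ w| ≤ 3/δ₀²` uniformly in `λ`.
-/

theorem HasDerivWithinAt.abs_Ioi_of_eq_zero {f : ℝ → ℝ} {f' x : ℝ}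
    (hf : HasDerivWithinAt f f' (Ioi x) x) (h₀ : f x = 0) :
    HasDerivWithinAt (fun t => |f t|) |f'| (Ioi x) x := by
  rw [hasDerivWithinAt_iff_isLittleO] at hf ⊢
  refine IsBigO.trans_isLittleO (IsBigO.of_bound 1 ?_) hf
  filter_upwards [self_mem_nhdsWithin] with t (ht : x < t)
  have hpos : |(t - x) • f'| = (t - x) • |f'| := by
    rw [smul_eq_mul, smul_eq_mul, abs_mul, abs_of_pos (sub_pos.2 ht)]
  simp only [h₀, abs_zero, sub_zero, Real.norm_eq_abs, one_mul, ← hpos]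
  exact abs_abs_sub_abs_le_abs_sub _ _

theorem HasDerivAt.exists_hasDerivWithinAt_Ioi_abs_le {f : ℝ → ℝ} {a b x : ℝ}
    (hf : HasDerivAt f (a * f x - b) x) :
    ∃ D, HasDerivWithinAt (fun t => |f t|) D (Ioi x) x ∧ D ≤ a * |f x| + |b| := by
  rcases lt_trichotomy (f x) 0 with hneg | hzero | hpos
  · refine ⟨-1 * (a * f x - b), ((hasDerivAt_abs_neg hneg).comp x hf).hasDerivWithinAt, ?_⟩
    rw [abs_of_neg hneg]
    linarith [le_abs_self b]
  · refine ⟨|a * f x - b|, hf.hasDerivWithinAt.abs_Ioi_of_eq_zero hzero, ?_⟩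
    simp [hzero]
  · refine ⟨1 * (a * f x - b), ((hasDerivAt_abs_pos hpos).comp x hf).hasDerivWithinAt, ?_⟩
    rw [abs_of_pos hpos]
    linarith [neg_abs_le b]

theorem mul_integral_abs_add_abs_le_of_hasDerivAt {w p h : ℝ → ℝ} {c s r : ℝ} (hsr : s ≤ r)
    (hw : ∀ t ∈ Icc s r, HasDerivAt w (-p t * w t - h t) t)
    (hp : ∀ t ∈ Ioo s r, c ≤ p t) (hh : IntegrableOn h (Icc s r)) :
    c * (∫ t in s..r, |w t|) + |w r| ≤ |w s| + ∫ t in s..r, |h t| := by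
  have hcont : ContinuousOn (fun t => |w t|) (Icc s r) :=
    fun t ht => (hw t ht).continuousAt.continuousWithinAt.abs
  have hD : ∀ t, ∃ D, t ∈ Ioo s r →
      HasDerivWithinAt (fun t => |w t|) D (Ioi t) t ∧ D ≤ -c * |w t| + |h t| := by
    intro t
    by_cases ht : t ∈ Ioo s r
    · obtain ⟨D, hD, hDle⟩ := (hw t (Ioo_subset_Icc_self ht)).exists_hasDerivWithinAt_Ioi_abs_le
      exact ⟨D, fun _ => ⟨hD, by nlinarith [hp t ht, abs_nonneg (w t)]⟩⟩
    · exact ⟨0, fun h => absurd h ht⟩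
  choose D hD using hD
  have hprim : ContinuousOn (fun u => ∫ t in s..u, |w t|) (Icc s r) := by
    simpa only [uIcc_of_le hsr] using intervalIntegral.continuousOn_primitive_interval'
      (hcont.intervalIntegrable_of_Icc hsr) left_mem_uIcc
  have key := intervalIntegral.sub_le_integral_of_hasDeriv_right_of_le
    (g := fun u => c * (∫ t in s..u, |w t|) + |w u|) (g' := fun t => c * |w t| + D t) hsr
    ((continuousOn_const.mul hprim).add hcont) (fun t ht => ?_) hh.abs (fun t ht => ?_)
  · simp only [intervalIntegral.integral_same, mul_zero, zero_add] at key
    linarith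
  · have hint : HasDerivAt (fun u => ∫ t in s..u, |w t|) |w t| t :=
      intervalIntegral.integral_hasDerivAt_right
        ((hcont.intervalIntegrable_of_Icc hsr).mono_set (by
          rw [uIcc_of_le hsr, uIcc_of_le ht.1.le]; exact Icc_subset_Icc_right ht.2.le))
        ((hcont.mono Ioo_subset_Icc_self).stronglyMeasurableAtFilter isOpen_Ioo t ht)
        (hw t (Ioo_subset_Icc_self ht)).continuousAt.abs
    exact (hint.hasDerivWithinAt.const_mul c).add (hD t ht).1
  · have := (hD t ht).2
    linarith

theorem hasDerivAt_div_sub_of_ode {y y' k : ℝ → ℝ} {y'' k' g t : ℝ}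
    (hy : HasDerivAt y (y' t) t) (hy' : HasDerivAt y' y'' t) (hk : HasDerivAt k k' t)
    (hyt : y t ≠ 0) (hode : y'' - k t ^ 2 * y t + g * y t = 0) :
    HasDerivAt (fun s => y' s / y s - k s)
      (-(y' t / y t + k t) * (y' t / y t - k t) - (g + k')) t := by
  refine ((hy'.div hy hyt).sub hk).congr_deriv ?_
  rw [show y'' = k t ^ 2 * y t - g * y t by linarith]
  field_simp
  ring

theorem log_sub_log_sub_integral_eq {y y' k : ℝ → ℝ} {s r : ℝ} (hsr : s ≤ r)
    (hy : ∀ t ∈ Icc s r, HasDerivAt y (y' t) t) (hy' : ContinuousOn y' (Icc s r))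
    (hk : ContinuousOn k (Icc s r)) (hpos : ∀ t ∈ Icc s r, 0 < y t) :
    log (y r) - log (y s) - ∫ t in s..r, k t = ∫ t in s..r, (y' t / y t - k t) := by
  have hycont : ContinuousOn y (Icc s r) := fun t ht => (hy t ht).continuousAt.continuousWithinAt
  have hdiv : ContinuousOn (fun t => y' t / y t) (Icc s r) :=
    hy'.div hycont fun t ht => (hpos t ht).ne'
  rw [intervalIntegral.integral_sub (hdiv.intervalIntegrable_of_Icc hsr)
    (hk.intervalIntegrable_of_Icc hsr)]
  congr 1
  refine (intervalIntegral.integral_eq_sub_of_hasDerivAt (f := fun t => log (y t))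
    (fun t ht => ?_) (hdiv.intervalIntegrable_of_Icc hsr)).symm
  rw [uIcc_of_le hsr] at ht
  exact (hy t ht).log (hpos t ht).ne'

theorem intervalIntegral_abs_le_setIntegral_Ici_abs {f : ℝ → ℝ} {s r : ℝ} (hsr : s ≤ r)
    (hf : IntegrableOn f (Ici s)) :
    ∫ t in s..r, |f t| ≤ ∫ t in Ici s, |f t| := by
  rw [intervalIntegral.integral_of_le hsr]
  exact setIntegral_mono_set hf.abs (Filter.Eventually.of_forall fun t => abs_nonneg _)
    (Ioc_subset_Icc_self.trans Icc_subset_Ici_self).eventuallyLE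

theorem intervalIntegral_abs_add_mul_le {G K' : ℝ → ℝ} {lam s r : ℝ} (hsr : s ≤ r)
    (hlam : 0 ≤ lam) (hGi : IntegrableOn G (Ici s)) (hK'i : IntegrableOn K' (Ici s)) :
    ∫ t in s..r, |G t + lam * K' t| ≤ (∫ t in Ici s, |G t|) + lam * ∫ t in Ici s, |K' t| := by
  have hsub : uIcc s r ⊆ Ici s := by rw [uIcc_of_le hsr]; exact Icc_subset_Ici_self
  have hGr := (hGi.mono_set hsub).intervalIntegrable.abs
  have hK'r := (hK'i.mono_set hsub).intervalIntegrable.abs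
  calc ∫ t in s..r, |G t + lam * K' t| ≤ ∫ t in s..r, (|G t| + lam * |K' t|) := by
        refine intervalIntegral.integral_mono_on hsr ?_ (hGr.add (hK'r.const_mul lam))
          fun t _ => ?_
        · exact ((hGi.add (hK'i.const_mul lam)).mono_set hsub).intervalIntegrable.abs
        · rw [← abs_of_nonneg hlam, ← abs_mul, abs_of_nonneg hlam]
          exact abs_add_le _ _
    _ = (∫ t in s..r, |G t|) + lam * ∫ t in s..r, |K' t| := by
        rw [intervalIntegral.integral_add hGr (hK'r.const_mul lam),
          intervalIntegral.integral_const_mul]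
    _ ≤ (∫ t in Ici s, |G t|) + lam * ∫ t in Ici s, |K' t| := by
        gcongr
        · exact intervalIntegral_abs_le_setIntegral_Ici_abs hsr hGi
        · exact intervalIntegral_abs_le_setIntegral_Ici_abs hsr hK'i

theorem abs_log_sub_integral_le {δ₀ lam s r : ℝ} {K K' G y y' y'' : ℝ → ℝ}
    (hδ₀ : 0 < δ₀) (hlam : 0 < lam) (hsr : s ≤ r)
    (hK : ∀ t, s ≤ t → K t ∈ Ioo δ₀ δ₀⁻¹) (hKd : ∀ t, s ≤ t → HasDerivAt K (K' t) t)
    (hK'i : IntegrableOn K' (Ici s)) (hK'1 : ∫ t in Ici s, |K' t| ≤ δ₀⁻¹)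
    (hGi : IntegrableOn G (Ici s)) (hG1 : ∫ t in Ici s, |G t| ≤ lam / δ₀)
    (hyd : ∀ t, s ≤ t → HasDerivAt y (y' t) t) (hy'd : ∀ t, s ≤ t → HasDerivAt y' (y'' t) t)
    (hode : ∀ t, s ≤ t → y'' t - lam ^ 2 * K t ^ 2 * y t + G t * y t = 0)
    (hpos : ∀ t, s ≤ t → 0 < y t) (hmono : MonotoneOn y (Ici s))
    (hys : y s = 1) (hy's : y' s ≤ lam / δ₀) :
    |log (y r) - lam * ∫ t in s..r, K t| ≤ 3 / δ₀ ^ 2 := by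
  set w := fun t => y' t / y t - lam * K t
  have hy'_nonneg : ∀ t, s ≤ t → 0 ≤ y' t := fun t ht =>
    (hyd t ht).hasDerivWithinAt.nonneg_of_monotoneOn (uniqueDiffOn_Ici s t ht).accPt hmono
  have hriccati : ∀ t ∈ Icc s r, HasDerivAt w
      (-(y' t / y t + lam * K t) * w t - (G t + lam * K' t)) t := fun t ht =>
    hasDerivAt_div_sub_of_ode (hyd t ht.1) (hy'd t ht.1) ((hKd t ht.1).const_mul lam)
      (hpos t ht.1).ne' (by rw [mul_pow]; exact hode t ht.1)
  have hdamping : ∀ t ∈ Ioo s r, lam * δ₀ ≤ y' t / y t + lam * K t := fun t ht => by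
    have := div_nonneg (hy'_nonneg t ht.1.le) (hpos t ht.1.le).le
    nlinarith [(hK t ht.1.le).1]
  have hws : |w s| ≤ lam / δ₀ := by
    have hKs := hK s le_rfl
    have : lam * K s < lam / δ₀ := by rw [div_eq_mul_inv]; exact mul_lt_mul_of_pos_left hKs.2 hlam
    simp only [w, hys, div_one]
    rw [abs_le]
    constructor <;> nlinarith [hy'_nonneg s le_rfl, hKs.1]
  have hforcing : ∫ t in s..r, |G t + lam * K' t| ≤ lam / δ₀ + lam * δ₀⁻¹ :=
    (intervalIntegral_abs_add_mul_le hsr hlam.le hGi hK'i).trans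
      (add_le_add hG1 (mul_le_mul_of_nonneg_left hK'1 hlam.le))
  have hlyap := mul_integral_abs_add_abs_le_of_hasDerivAt hsr hriccati hdamping
    ((hGi.add (hK'i.const_mul lam)).mono_set Icc_subset_Ici_self)
  have hlog : log (y r) - lam * ∫ t in s..r, K t = ∫ t in s..r, w t := by
    have hKc : ContinuousOn (fun t => lam * K t) (Icc s r) := fun t ht =>
      ((hKd t ht.1).const_mul lam).continuousAt.continuousWithinAt
    rw [← intervalIntegral.integral_const_mul, ← log_sub_log_sub_integral_eq hsr
      (fun t ht => hyd t ht.1) (fun t ht => (hy'd t ht.1).continuousAt.continuousWithinAt) hKc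
      (fun t ht => hpos t ht.1), hys, log_one, sub_zero]
  have hint : ∫ t in s..r, |w t| ≤ 3 / δ₀ ^ 2 := by
    have hprod : lam * δ₀ * ∫ t in s..r, |w t| ≤ lam * δ₀ * (3 / δ₀ ^ 2) := by
      have : lam * δ₀ * (3 / δ₀ ^ 2) = lam / δ₀ + (lam / δ₀ + lam * δ₀⁻¹) := by
        field_simp; ring
      linarith [abs_nonneg (w r)]
    exact le_of_mul_le_mul_left hprod (by positivity)
  rw [hlog]
  exact (intervalIntegral.abs_integral_le_integral_abs hsr).trans hint

theorem stmt_1 (δ₀ : ℝ) (hδ : δ₀ ∈ Ioo (0:ℝ) 1) :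
    ∃ c C : ℝ, 0 < c ∧ c ≤ C ∧
      ∀ (lam : ℝ), lam ∈ Ioc (0:ℝ) 1 →
      ∀ (K K' G y y' y'' : ℝ → ℝ),
        (∀ r : ℝ, 1/lam ≤ r → K r ∈ Ioo δ₀ δ₀⁻¹) →
        (∀ r : ℝ, 1/lam ≤ r → HasDerivAt K (K' r) r) →
        ContinuousOn K' (Ici (1/lam)) →
        IntegrableOn K' (Ici (1/lam)) →
        (∫ r in Ici (1/lam), |K' r|) ≤ δ₀⁻¹ →
        IntegrableOn G (Ici (1/lam)) →
        (∫ r in Ici (1/lam), |G r|) ≤ lam / δ₀ →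
        (∀ r : ℝ, 1/lam ≤ r → HasDerivAt y (y' r) r) →
        (∀ r : ℝ, 1/lam ≤ r → HasDerivAt y' (y'' r) r) →
        (∀ r : ℝ, 1/lam ≤ r → y'' r - lam^2 * (K r)^2 * y r + G r * y r = 0) →
        (∀ r : ℝ, 1/lam ≤ r → 0 < y r) →
        StrictMonoOn y (Ici (1/lam)) →
        y (1/lam) = 1 →
        y' (1/lam) ∈ Ioo 0 (lam / δ₀) →
        ∀ r : ℝ, 1/lam ≤ r →
          c * Real.exp (lam * ∫ τ in (1/lam)..r, K τ) ≤ y r ∧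
          y r ≤ C * Real.exp (lam * ∫ τ in (1/lam)..r, K τ) := by
  have hδ₀ : 0 < δ₀ := hδ.1
  refine ⟨exp (-(3 / δ₀ ^ 2)), exp (3 / δ₀ ^ 2), exp_pos _,
    exp_le_exp.2 (neg_le_self (by positivity)), ?_⟩
  intro lam hlam K K' G y y' y'' hK hKd _ hK'i hK'1 hGi hG1 hyd hy'd hode hpos hmono hy1 hy'0 r hr
  have hbound := abs_le.1 <| abs_log_sub_integral_le hδ₀ hlam.1 hr hK hKd hK'i hK'1 hGi hG1
    hyd hy'd hode hpos hmono.monotoneOn hy1 hy'0.2.le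
  rw [← exp_log (hpos r hr), ← exp_add, ← exp_add]
  constructor <;> gcongr <;> linarith [hbound.1, hbound.2]
end

section
/- Let δ₁ ∈ (0,1), λ₀ > 0, and m̃ : [0,∞) → [δ₁,1/δ₁] continuous with η(t) := ∫₀ᵗ m̃(τ)dτ. There exists c₃ > 0, independent of λ ∈ (0,λ₀], such that the solution y of y'' = λ²m̃(t)²y, y(0)=0, y'(0)=1 satisfies y(t) ≥ c₃·sinh(λη(t))/λ and y'(t) ≥ c₃·cosh(λη(t)) for all t ≥ 0. -/
/-!
`y y'` and `y'² - (λ δ y)²` are nondecreasing (their derivatives are `y'² + (λ m y)²` and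
`2 λ² (m² - δ²) y y'`), which gives `y' ≥ 1`, `y ≥ t` and `y' ≥ λ δ y`. While `λ t ≤ 1` we have
`λ η ≤ 1/δ`, so `sinh (λ η) / λ` and `cosh (λ η)` are controlled by `η ≤ t/δ` and by `1`. For
`λ t ≥ 1`, the weighted product `y y' exp (-2 λ η)`, with derivative `(y' - λ m y)² exp (-2 λ η)`,
is nondecreasing and at least `exp (-2/δ) / λ` at `t = 1/λ`; with `y' ≥ λ δ y` this gives
`y' ≥ δ exp (-1/δ) exp (λ η)`, and integrating, `λ y ≥ δ² exp (-1/δ) exp (λ η)`. Hence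
`c₃ = δ² exp (-1/δ)` works for every `λ > 0`.
-/

open Set Real

theorem monotoneOn_Ici_of_hasDerivAt_nonneg {f f' : ℝ → ℝ} {a : ℝ}
    (hf : ∀ t, a ≤ t → HasDerivAt f (f' t) t) (hf' : ∀ t, a ≤ t → 0 ≤ f' t) :
    MonotoneOn f (Ici a) :=
  monotoneOn_of_hasDerivWithinAt_nonneg (convex_Ici a)
    (fun t ht => (hf t ht).continuousAt.continuousWithinAt)
    (fun t ht => (hf t (interior_subset ht)).hasDerivWithinAt)
    (fun t ht => hf' t (interior_subset ht))

theorem le_of_hasDerivAt_le_of_le {f g f' g' : ℝ → ℝ} {a t : ℝ}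
    (hf : ∀ t, a ≤ t → HasDerivAt f (f' t) t) (hg : ∀ t, a ≤ t → HasDerivAt g (g' t) t)
    (hfg' : ∀ t, a ≤ t → f' t ≤ g' t) (ha : f a ≤ g a) (ht : a ≤ t) : f t ≤ g t := by
  have := monotoneOn_Ici_of_hasDerivAt_nonneg (fun t ht => (hg t ht).sub (hf t ht))
    (fun t ht => sub_nonneg.2 (hfg' t ht)) self_mem_Ici (mem_Ici.2 ht) ht
  simp only [Pi.sub_apply] at this
  linarith

theorem sinh_le_mul_cosh {x : ℝ} (hx : 0 ≤ x) : sinh x ≤ x * cosh x :=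
  le_of_hasDerivAt_le_of_le (fun t _ => hasDerivAt_sinh t)
    (fun t _ => ((hasDerivAt_id t).mul (hasDerivAt_cosh t)))
    (fun t ht => by simp only [id, one_mul]; nlinarith [sinh_nonneg_iff.2 ht])
    (by simp) hx

theorem sinh_le_exp (x : ℝ) : sinh x ≤ exp x := by
  linarith [exp_sub_sinh x, cosh_pos x]

theorem cosh_le_exp {x : ℝ} (hx : 0 ≤ x) : cosh x ≤ exp x := by
  linarith [exp_sub_cosh x, sinh_nonneg_iff.2 hx]

theorem sinh_cosh_bounds_of_le_inv {δ x : ℝ} (hδ0 : 0 < δ) (hδ1 : δ ≤ 1) (hx0 : 0 ≤ x)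
    (hx : x ≤ δ⁻¹) :
    δ ^ 2 * exp (-δ⁻¹) * sinh x ≤ δ * x ∧ δ ^ 2 * exp (-δ⁻¹) * cosh x ≤ 1 := by
  have hcosh : exp (-δ⁻¹) * cosh x ≤ 1 := by
    calc exp (-δ⁻¹) * cosh x ≤ exp (-δ⁻¹) * exp δ⁻¹ := by
          gcongr
          exact (cosh_le_exp hx0).trans (exp_le_exp.2 hx)
      _ = 1 := by rw [← exp_add, neg_add_cancel, exp_zero]
  have hδ2 : δ ^ 2 ≤ δ := by nlinarith
  constructor
  · calc δ ^ 2 * exp (-δ⁻¹) * sinh x ≤ δ ^ 2 * exp (-δ⁻¹) * (x * cosh x) := by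
          gcongr
          exact sinh_le_mul_cosh hx0
      _ = δ ^ 2 * x * (exp (-δ⁻¹) * cosh x) := by ring
      _ ≤ δ * x := by nlinarith [mul_nonneg (sq_nonneg δ) hx0]
  · nlinarith [exp_pos (-δ⁻¹), cosh_pos x]

structure IsFundamentalSolution (lam : ℝ) (m y y' : ℝ → ℝ) : Prop where
  hasDerivAt : ∀ t, 0 ≤ t → HasDerivAt y (y' t) t
  hasDerivAt_deriv : ∀ t, 0 ≤ t → HasDerivAt y' (lam ^ 2 * m t ^ 2 * y t) t
  zero : y 0 = 0
  deriv_zero : y' 0 = 1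

namespace IsFundamentalSolution

variable {lam δ t : ℝ} {m η y y' : ℝ → ℝ}

theorem mul_deriv_nonneg (h : IsFundamentalSolution lam m y y') (ht : 0 ≤ t) :
    0 ≤ y t * y' t := by
  have hmono := monotoneOn_Ici_of_hasDerivAt_nonneg
    (f' := fun t => y' t ^ 2 + (lam * m t * y t) ^ 2)
    (fun t ht => ((h.hasDerivAt t ht).mul (h.hasDerivAt_deriv t ht)).congr_deriv (by ring))
    (fun t _ => by positivity) self_mem_Ici (mem_Ici.2 ht) ht
  simpa [h.zero] using hmono

theorem sq_add_one_le_sq_deriv (h : IsFundamentalSolution lam m y y')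
    (hm : ∀ t, 0 ≤ t → δ ^ 2 ≤ m t ^ 2) (ht : 0 ≤ t) :
    (lam * δ * y t) ^ 2 + 1 ≤ y' t ^ 2 := by
  have hmono := monotoneOn_Ici_of_hasDerivAt_nonneg
    (f := fun t => y' t ^ 2 - (lam * δ * y t) ^ 2)
    (f' := fun t => 2 * lam ^ 2 * (m t ^ 2 - δ ^ 2) * (y t * y' t))
    (fun t ht => (((h.hasDerivAt_deriv t ht).pow 2).sub
      (((h.hasDerivAt t ht).const_mul (lam * δ)).pow 2)).congr_deriv (by ring))
    (fun t ht => mul_nonneg (mul_nonneg (by positivity) (sub_nonneg.2 (hm t ht)))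
      (h.mul_deriv_nonneg ht))
    self_mem_Ici (mem_Ici.2 ht) ht
  simp only [h.zero, h.deriv_zero] at hmono
  linarith

theorem one_le_deriv (h : IsFundamentalSolution lam m y y') (ht : 0 ≤ t) : 1 ≤ y' t := by
  have hsq (s : ℝ) (hs : 0 ≤ s) : 1 ≤ y' s ^ 2 := by
    simpa using h.sq_add_one_le_sq_deriv (δ := 0) (fun _ _ => by simpa using sq_nonneg _) hs
  by_contra! hlt
  have hneg : y' t ≤ -1 := by nlinarith [hsq t ht]
  -- `y'` cannot cross from `1` to `≤ -1` without vanishing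
  obtain ⟨s, hs, hs0⟩ : (0 : ℝ) ∈ y' '' Icc 0 t :=
    intermediate_value_Icc' ht
      (fun s hs => (h.hasDerivAt_deriv s hs.1).continuousAt.continuousWithinAt)
      ⟨by linarith, by rw [h.deriv_zero]; norm_num⟩
  have := hsq s hs.1
  rw [hs0] at this
  norm_num at this

theorem self_le (h : IsFundamentalSolution lam m y y') (ht : 0 ≤ t) : t ≤ y t := by
  simpa using le_of_hasDerivAt_le_of_le (fun t _ => hasDerivAt_id t) h.hasDerivAt
    (fun t ht => h.one_le_deriv ht) (by simp [h.zero]) ht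

theorem mul_le_deriv (h : IsFundamentalSolution lam m y y')
    (hm : ∀ t, 0 ≤ t → δ ^ 2 ≤ m t ^ 2) (ht : 0 ≤ t) : lam * δ * y t ≤ y' t :=
  (abs_le_of_sq_le_sq' (by linarith [h.sq_add_one_le_sq_deriv hm ht])
    (by linarith [h.one_le_deriv ht])).2

theorem monotoneOn_mul_exp (h : IsFundamentalSolution lam m y y')
    (hη : ∀ t, 0 ≤ t → HasDerivAt η (m t) t) :
    MonotoneOn (fun t => y t * y' t * exp (-2 * lam * η t)) (Ici 0) :=
  monotoneOn_Ici_of_hasDerivAt_nonneg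
    (f' := fun t => (y' t - lam * m t * y t) ^ 2 * exp (-2 * lam * η t))
    (fun t ht => (((h.hasDerivAt t ht).mul (h.hasDerivAt_deriv t ht)).mul
      (((hη t ht).const_mul (-2 * lam)).exp)).congr_deriv (by simp only [Pi.mul_apply]; ring))
    (fun t _ => by positivity)

theorem exp_le_deriv_of_inv_le (h : IsFundamentalSolution lam m y y') (hlam : 0 < lam)
    (hδ0 : 0 < δ) (hδ1 : δ ≤ 1) (hm : ∀ t, 0 ≤ t → δ ≤ m t)
    (hη : ∀ t, 0 ≤ t → HasDerivAt η (m t) t)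
    (hη_le : lam * η lam⁻¹ ≤ δ⁻¹) (ht : lam⁻¹ ≤ t) :
    δ * exp (-δ⁻¹) * exp (lam * η t) ≤ y' t := by
  have hs0 : 0 ≤ lam⁻¹ := inv_nonneg.2 hlam.le
  have ht0 : 0 ≤ t := hs0.trans ht
  have hm2 (t : ℝ) (ht : 0 ≤ t) : δ ^ 2 ≤ m t ^ 2 := pow_le_pow_left₀ hδ0.le (hm t ht) 2
  have hstart : lam⁻¹ * exp (-δ⁻¹) ^ 2 ≤ y lam⁻¹ * y' lam⁻¹ * exp (-2 * lam * η lam⁻¹) := by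
    have hexp : exp (-δ⁻¹) ^ 2 ≤ exp (-2 * lam * η lam⁻¹) := by
      rw [← exp_nat_mul]
      exact exp_le_exp.2 (by push_cast; linarith)
    have hy := h.self_le hs0
    have hy' := h.one_le_deriv hs0
    calc lam⁻¹ * exp (-δ⁻¹) ^ 2 ≤ y lam⁻¹ * 1 * exp (-2 * lam * η lam⁻¹) := by
          rw [mul_one]; gcongr; exact hs0.trans hy
      _ ≤ _ := by gcongr; exact hs0.trans hy
  have hprod : exp (-δ⁻¹) ^ 2 * exp (lam * η t) ^ 2 ≤ lam * (y t * y' t) := by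
    have hmono := hstart.trans
      (h.monotoneOn_mul_exp hη (mem_Ici.2 hs0) (mem_Ici.2 ht0) ht)
    have hcancel : exp (-2 * lam * η t) * exp (lam * η t) ^ 2 = 1 := by
      rw [← exp_nat_mul, ← exp_add]; push_cast; ring_nf; exact exp_zero
    have := mul_le_mul_of_nonneg_right hmono (by positivity : 0 ≤ lam * exp (lam * η t) ^ 2)
    calc exp (-δ⁻¹) ^ 2 * exp (lam * η t) ^ 2
        = lam⁻¹ * exp (-δ⁻¹) ^ 2 * (lam * exp (lam * η t) ^ 2) := by field_simp
      _ ≤ y t * y' t * exp (-2 * lam * η t) * (lam * exp (lam * η t) ^ 2) := this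
      _ = lam * (y t * y' t) * (exp (-2 * lam * η t) * exp (lam * η t) ^ 2) := by ring
      _ = lam * (y t * y' t) := by rw [hcancel, mul_one]
  have hy' : 0 ≤ y' t := zero_le_one.trans (h.one_le_deriv ht0)
  -- `y' ≥ λ δ y` turns the lower bound on `y y'` into one on `y'²`
  have hsq : (δ * exp (-δ⁻¹) * exp (lam * η t)) ^ 2 ≤ y' t ^ 2 := by
    have hyy' := mul_le_mul_of_nonneg_right (h.mul_le_deriv hm2 ht0) hy'
    have hδ2 : δ ^ 2 ≤ δ := by nlinarith
    calc (δ * exp (-δ⁻¹) * exp (lam * η t)) ^ 2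
        = δ ^ 2 * (exp (-δ⁻¹) ^ 2 * exp (lam * η t) ^ 2) := by ring
      _ ≤ δ * (lam * (y t * y' t)) := by gcongr
      _ ≤ y' t ^ 2 := by nlinarith
  exact (abs_le_of_sq_le_sq' hsq hy').2

theorem exp_le_mul_of_inv_le (h : IsFundamentalSolution lam m y y') (hlam : 0 < lam)
    (hδ0 : 0 < δ) (hδ1 : δ ≤ 1) (hm : ∀ t, 0 ≤ t → m t ∈ Icc δ δ⁻¹)
    (hη : ∀ t, 0 ≤ t → HasDerivAt η (m t) t) (hη_le : lam * η lam⁻¹ ≤ δ⁻¹) (ht : lam⁻¹ ≤ t) :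
    δ ^ 2 * exp (-δ⁻¹) * exp (lam * η t) ≤ lam * y t := by
  have hs0 : 0 ≤ lam⁻¹ := inv_nonneg.2 hlam.le
  refine le_of_hasDerivAt_le_of_le
    (fun s hs => (((hη s (hs0.trans hs)).const_mul lam).exp.const_mul (δ ^ 2 * exp (-δ⁻¹))))
    (fun s hs => (h.hasDerivAt s (hs0.trans hs)).const_mul lam) (fun s hs => ?_) ?_ ht
  · have hs' := h.exp_le_deriv_of_inv_le hlam hδ0 hδ1 (fun t ht => (hm t ht).1) hη hη_le hs
    have hδm : δ ^ 2 * m s ≤ δ := by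
      calc δ ^ 2 * m s ≤ δ ^ 2 * δ⁻¹ := by gcongr; exact (hm s (hs0.trans hs)).2
        _ = δ := by field_simp
    calc δ ^ 2 * exp (-δ⁻¹) * (exp (lam * η s) * (lam * m s))
        = lam * (δ ^ 2 * m s) * (exp (-δ⁻¹) * exp (lam * η s)) := by ring
      _ ≤ lam * δ * (exp (-δ⁻¹) * exp (lam * η s)) := by gcongr
      _ ≤ lam * y' s := by rw [mul_assoc lam]; gcongr; linarith
  · have hcap : exp (-δ⁻¹) * exp (lam * η lam⁻¹) ≤ 1 := by
      rw [← exp_add, ← exp_zero]; exact exp_le_exp.2 (by linarith)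
    have hy := h.self_le hs0
    calc δ ^ 2 * exp (-δ⁻¹) * exp (lam * η lam⁻¹)
        = δ ^ 2 * (exp (-δ⁻¹) * exp (lam * η lam⁻¹)) := by ring
      _ ≤ 1 := by nlinarith
      _ = lam * lam⁻¹ := (mul_inv_cancel₀ hlam.ne').symm
      _ ≤ lam * y lam⁻¹ := by gcongr

theorem mul_sinh_le_and_mul_cosh_le (h : IsFundamentalSolution lam m y y') (hlam : 0 < lam)
    (hδ0 : 0 < δ) (hδ1 : δ ≤ 1) (hm : ∀ t, 0 ≤ t → m t ∈ Icc δ δ⁻¹)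
    (hη : ∀ t, 0 ≤ t → HasDerivAt η (m t) t) (hη0 : η 0 = 0) (ht : 0 ≤ t) :
    δ ^ 2 * exp (-δ⁻¹) * sinh (lam * η t) ≤ lam * y t ∧
      δ ^ 2 * exp (-δ⁻¹) * cosh (lam * η t) ≤ y' t := by
  have hη_nonneg (s : ℝ) (hs : 0 ≤ s) : 0 ≤ η s := by
    simpa [hη0] using monotoneOn_Ici_of_hasDerivAt_nonneg hη
      (fun s hs => hδ0.le.trans (hm s hs).1) self_mem_Ici (mem_Ici.2 hs) hs
  have hη_le (s : ℝ) (hs : 0 ≤ s) : lam * η s ≤ δ⁻¹ * (lam * s) := by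
    have := le_of_hasDerivAt_le_of_le hη (fun s _ => (hasDerivAt_id s).const_mul δ⁻¹)
      (fun s hs => by simpa using (hm s hs).2) (by simp [hη0]) hs
    simp only [id] at this
    nlinarith
  have hx0 : 0 ≤ lam * η t := mul_nonneg hlam.le (hη_nonneg t ht)
  rcases le_or_gt (lam * t) 1 with hsmall | hlarge
  · obtain ⟨hsinh, hcosh⟩ := sinh_cosh_bounds_of_le_inv hδ0 hδ1 hx0
      ((hη_le t ht).trans (mul_le_of_le_one_right (inv_nonneg.2 hδ0.le) hsmall))
    refine ⟨?_, hcosh.trans (h.one_le_deriv ht)⟩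
    calc δ ^ 2 * exp (-δ⁻¹) * sinh (lam * η t) ≤ δ * (lam * η t) := hsinh
      _ ≤ δ * (δ⁻¹ * (lam * t)) := mul_le_mul_of_nonneg_left (hη_le t ht) hδ0.le
      _ = lam * t := by field_simp
      _ ≤ lam * y t := by gcongr; exact h.self_le ht
  · have hs : lam⁻¹ ≤ t := by
      rw [inv_le_iff_one_le_mul₀' hlam]; exact hlarge.le
    have hη_s : lam * η lam⁻¹ ≤ δ⁻¹ := by
      simpa [mul_inv_cancel₀ hlam.ne'] using hη_le _ (inv_nonneg.2 hlam.le)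
    constructor
    · calc δ ^ 2 * exp (-δ⁻¹) * sinh (lam * η t) ≤ δ ^ 2 * exp (-δ⁻¹) * exp (lam * η t) := by
            gcongr; exact sinh_le_exp _
        _ ≤ lam * y t := h.exp_le_mul_of_inv_le hlam hδ0 hδ1 hm hη hη_s hs
    · calc δ ^ 2 * exp (-δ⁻¹) * cosh (lam * η t) ≤ δ * exp (-δ⁻¹) * exp (lam * η t) := by
            gcongr
            · nlinarith
            · exact cosh_le_exp hx0
        _ ≤ y' t := h.exp_le_deriv_of_inv_le hlam hδ0 hδ1 (fun t ht => (hm t ht).1) hη hη_s hs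

end IsFundamentalSolution

theorem stmt_7_general
    (δ₁ lam₀ : ℝ) (hδ : δ₁ ∈ Ioo (0:ℝ) 1)
    (mt : ℝ → ℝ) (hmt_cont : Continuous mt)
    (hmt : ∀ t : ℝ, 0 ≤ t → mt t ∈ Icc δ₁ δ₁⁻¹) :
    ∃ c₃ : ℝ, 0 < c₃ ∧
      ∀ (lam : ℝ), lam ∈ Ioc 0 lam₀ →
      ∀ (y y' y'' : ℝ → ℝ),
        (∀ t : ℝ, 0 ≤ t → HasDerivAt y (y' t) t) →
        (∀ t : ℝ, 0 ≤ t → HasDerivAt y' (y'' t) t) →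
        (∀ t : ℝ, 0 ≤ t → y'' t = lam^2 * (mt t)^2 * y t) →
        y 0 = 0 → y' 0 = 1 →
        ∀ t : ℝ, 0 ≤ t →
          y t ≥ c₃ * Real.sinh (lam * ∫ τ in (0:ℝ)..t, mt τ) / lam ∧
          y' t ≥ c₃ * Real.cosh (lam * ∫ τ in (0:ℝ)..t, mt τ) := by
  refine ⟨δ₁ ^ 2 * exp (-δ₁⁻¹), by have := hδ.1; positivity, ?_⟩
  rintro lam ⟨hlam, -⟩ y y' y'' hy hy' hode hy0 hy'0 t ht
  have hsol : IsFundamentalSolution lam mt y y' :=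
    ⟨hy, fun t ht => hode t ht ▸ hy' t ht, hy0, hy'0⟩
  obtain ⟨hy_bound, hy'_bound⟩ := hsol.mul_sinh_le_and_mul_cosh_le hlam hδ.1 hδ.2.le hmt
    (fun t _ => (hmt_cont.integral_hasStrictDerivAt 0 t).hasDerivAt) (by simp) ht
  exact ⟨by rw [ge_iff_le, div_le_iff₀ hlam, mul_comm (y t)]; exact hy_bound, hy'_bound⟩

theorem stmt_7
    (δ₁ lam₀ : ℝ) (hδ : δ₁ ∈ Ioo (0:ℝ) 1) (hlam₀ : 0 < lam₀)
    (mt : ℝ → ℝ) (hmt_cont : Continuous mt)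
    (hmt : ∀ t : ℝ, 0 ≤ t → mt t ∈ Icc δ₁ δ₁⁻¹) :
    ∃ c₃ : ℝ, 0 < c₃ ∧
      ∀ (lam : ℝ), lam ∈ Ioc 0 lam₀ →
      ∀ (y y' y'' : ℝ → ℝ),
        (∀ t : ℝ, 0 ≤ t → HasDerivAt y (y' t) t) →
        (∀ t : ℝ, 0 ≤ t → HasDerivAt y' (y'' t) t) →
        (∀ t : ℝ, 0 ≤ t → y'' t = lam^2 * (mt t)^2 * y t) →
        y 0 = 0 → y' 0 = 1 →
        ∀ t : ℝ, 0 ≤ t →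
          y t ≥ c₃ * Real.sinh (lam * ∫ τ in (0:ℝ)..t, mt τ) / lam ∧
          y' t ≥ c₃ * Real.cosh (lam * ∫ τ in (0:ℝ)..t, mt τ) :=
  stmt_7_general δ₁ lam₀ hδ mt hmt_cont hmt
end

section
/- Let q > 0 and a, R > 0. For 0 ≤ t < T, ∫_{a/(2⟨t⟩)}^{a/⟨t⟩} (1 − e^{−2λ(T−t)})/(2(T−t)) · λ^{q−1} dλ ≥ c·⟨T⟩^{−1}·⟨t⟩^{−q} for a constant c > 0 depending only on q and a (with ⟨t⟩ = √(1+t²)). -/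
/-!
From `exp x ≥ 1 + x` one gets `1 - exp (-x) ≥ x / (1 + x)`, so the kernel
`(1 - exp (-2λτ)) / (2τ)` is at least `λ / (1 + 2λτ) = 1 / (1/λ + 2τ)`. On the window
`λ ≥ a / (2⟨t⟩)` with `τ = T - t ≤ ⟨T⟩` and `⟨t⟩ ≤ ⟨T⟩`, this is at least `a / (2 (1 + a) ⟨T⟩)`.
What remains is `∫_{b/2}^{b} λ^(q-1) dλ = (1 - 2^(-q)) b^q / q` with `b = a / ⟨t⟩`.
-/

open Set Real

namespace Real

lemma div_one_add_le_one_sub_exp_neg {x : ℝ} (hx : 0 ≤ x) : x / (1 + x) ≤ 1 - exp (-x) := by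
  have h : exp (-x) * (1 + x) ≤ 1 := by
    calc exp (-x) * (1 + x) ≤ exp (-x) * exp x := by gcongr; linarith [add_one_le_exp x]
      _ = 1 := by rw [← exp_add, neg_add_cancel, exp_zero]
  rw [div_le_iff₀ (by linarith)]
  nlinarith

lemma div_one_add_mul_le_one_sub_exp_neg_div {lam τ : ℝ} (hlam : 0 ≤ lam) (hτ : 0 < τ) :
    lam / (1 + 2 * lam * τ) ≤ (1 - exp (-2 * lam * τ)) / (2 * τ) := by
  have h := div_one_add_le_one_sub_exp_neg (x := 2 * lam * τ) (by positivity)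
  rw [neg_mul, neg_mul]
  calc lam / (1 + 2 * lam * τ) = 2 * lam * τ / (1 + 2 * lam * τ) / (2 * τ) := by
        field_simp
    _ ≤ (1 - exp (-(2 * lam * τ))) / (2 * τ) := by gcongr

lemma one_le_sqrt_one_add_sq (t : ℝ) : 1 ≤ √(1 + t ^ 2) :=
  one_le_sqrt.mpr (by nlinarith [sq_nonneg t])

lemma le_sqrt_one_add_sq (t : ℝ) : t ≤ √(1 + t ^ 2) :=
  le_sqrt_of_sq_le (by linarith)

lemma sqrt_one_add_sq_le_sqrt_one_add_sq {t T : ℝ} (ht : 0 ≤ t) (htT : t ≤ T) :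
    √(1 + t ^ 2) ≤ √(1 + T ^ 2) :=
  sqrt_le_sqrt (by nlinarith)

lemma integral_rpow_sub_one_half_to (q : ℝ) {b : ℝ} (hq : q ≠ 0) (hb : 0 < b) :
    ∫ x in b / 2..b, x ^ (q - 1) = (1 - 2 ^ (-q)) / q * b ^ q := by
  have h0 : (0 : ℝ) ∉ uIcc (b / 2) b := by
    rw [uIcc_of_le (by linarith)]; exact fun h => by linarith [h.1]
  rw [integral_rpow (Or.inr ⟨by contrapose! hq; linarith, h0⟩), sub_add_cancel,
    div_rpow hb.le zero_le_two, rpow_neg zero_le_two]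
  field_simp

end Real

open Real

lemma mul_integral_rpow_le_integral_mul_rpow {f : ℝ → ℝ} {c u v q : ℝ} (hf : Continuous f)
    (hu : 0 < u) (huv : u ≤ v) (hc : ∀ x ∈ Icc u v, c ≤ f x) :
    c * ∫ x in u..v, x ^ (q - 1) ≤ ∫ x in u..v, f x * x ^ (q - 1) := by
  have hpow : ContinuousOn (fun x : ℝ => x ^ (q - 1)) (Icc u v) :=
    continuousOn_id.rpow_const fun x hx => Or.inl (hu.trans_le hx.1).ne'
  rw [← intervalIntegral.integral_const_mul]
  exact intervalIntegral.integral_mono_on huv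
    ((continuousOn_const.mul hpow).intervalIntegrable_of_Icc huv)
    ((hf.continuousOn.mul hpow).intervalIntegrable_of_Icc huv)
    fun x hx => mul_le_mul_of_nonneg_right (hc x hx) (rpow_nonneg (hu.trans_le hx.1).le _)

lemma le_kernel_of_mem_window {a s S lam τ : ℝ} (ha : 0 < a) (hs : 0 < s)
    (hlam : a / (2 * s) ≤ lam) (hsS : s ≤ S) (hτ : 0 < τ) (hτS : τ ≤ S) :
    a / (2 * (1 + a)) / S ≤ (1 - exp (-2 * lam * τ)) / (2 * τ) := by
  have hlam0 : 0 < lam := lt_of_lt_of_le (by positivity) hlam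
  have hS : 0 < S := hs.trans_le hsS
  have ha_le : a ≤ 2 * lam * s := by rw [div_le_iff₀ (by positivity)] at hlam; linarith
  refine le_trans ?_ (div_one_add_mul_le_one_sub_exp_neg_div hlam0.le hτ)
  rw [div_div, div_le_div_iff₀ (by positivity) (by positivity)]
  nlinarith [mul_le_mul_of_nonneg_left hτS (by positivity : 0 ≤ 2 * a * lam),
    mul_le_mul_of_nonneg_left hsS (by positivity : 0 ≤ 2 * lam)]

theorem stmt_11_general (q a : ℝ) (hq : 0 < q) (ha : 0 < a) :
    ∃ c : ℝ, 0 < c ∧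
      ∀ (T t : ℝ), 0 ≤ t → t < T →
        (∫ lam in (a / (2 * Real.sqrt (1 + t^2)))..(a / Real.sqrt (1 + t^2)),
            (1 - Real.exp (-2 * lam * (T - t))) / (2 * (T - t)) * lam ^ (q - 1))
          ≥ c * (Real.sqrt (1 + T^2))⁻¹ * Real.sqrt (1 + t^2) ^ (-q) := by
  have h2q : 0 < 1 - (2 : ℝ) ^ (-q) :=
    sub_pos.2 (rpow_lt_one_of_one_lt_of_neg one_lt_two (neg_neg_of_pos hq))
  refine ⟨a / (2 * (1 + a)) * ((1 - 2 ^ (-q)) / q * a ^ q),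
    by have := rpow_pos_of_pos ha q; positivity, fun T t ht htT => ?_⟩
  set s := √(1 + t ^ 2)
  set S := √(1 + T ^ 2)
  have hs : 0 < s := one_pos.trans_le (one_le_sqrt_one_add_sq t)
  have hsS : s ≤ S := sqrt_one_add_sq_le_sqrt_one_add_sq ht htT.le
  have hτS : T - t ≤ S := by linarith [le_sqrt_one_add_sq T]
  have hwindow : a / (2 * s) = a / s / 2 := by rw [div_div, mul_comm]
  rw [hwindow, ge_iff_le]
  calc a / (2 * (1 + a)) * ((1 - 2 ^ (-q)) / q * a ^ q) * S⁻¹ * s ^ (-q)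
      = a / (2 * (1 + a)) / S * ∫ lam in a / s / 2..a / s, lam ^ (q - 1) := by
        rw [integral_rpow_sub_one_half_to q hq.ne' (by positivity), div_rpow ha.le hs.le,
          rpow_neg hs.le]
        ring
    _ ≤ _ := mul_integral_rpow_le_integral_mul_rpow (by fun_prop) (by positivity)
        (by linarith [div_pos ha hs]) fun lam h =>
          le_kernel_of_mem_window ha hs (hwindow ▸ h.1) hsS (by linarith) hτS

theorem stmt_11 (q a R : ℝ) (hq : 0 < q) (ha : 0 < a) (hR : 0 < R) :
    ∃ c : ℝ, 0 < c ∧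
      ∀ (T t : ℝ), 0 ≤ t → t < T →
        (∫ lam in (a / (2 * Real.sqrt (1 + t^2)))..(a / Real.sqrt (1 + t^2)),
            (1 - Real.exp (-2 * lam * (T - t))) / (2 * (T - t)) * lam ^ (q - 1))
          ≥ c * (Real.sqrt (1 + T^2))⁻¹ * Real.sqrt (1 + t^2) ^ (-q) :=
  stmt_11_general q a hq ha
end
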